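/- Every transversal matroid can be represented by a matrix with integer entries. Precisely: for every finite set S = {a_1, …, a_n} and finite family 𝒜 = (A_1, …, A_m) of subsets of S, there exists an m × n matrix X with entries in ℤ such that, for every subset J of {1, …, n}, the columns of X indexed by J are linearly independent over ℚ if and only if {a_j : j ∈ J} is a partial transversal of 𝒜. -/

import Mathlib

/-!
Take `X i j = 2 ^ 2 ^ k(i, j)` for `j ∈ A i` and `X i j = 0` otherwise, where `k` numbers the
pairs `(i, j)` injectively. If the columns indexed by `J` are independent, the columns of any
`s ⊆ J` live on the rows of the neighbourhood `N(s)`, so `|s| ≤ |N(s)|` and Hall's theorem gives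
a matching. Conversely, a matching `φ` selects a square minor whose determinant is a signed sum,
over permutations `σ`, of `2 ^ ∑ₖ 2 ^ k(φ (σ k), k)`. Distinct `σ` give distinct sets of binary
digits in the exponent, so the nonzero terms are distinct powers of two up to sign; the identity
term is nonzero, and such a sum cannot vanish because its smallest term is not divisible by twice
its own absolute value while all the others are.
-/

/-- `I` is a partial transversal of the set system `A : Fin m → Finset (Fin n)`. -/
def IsPartialTransversal {n m : ℕ} (A : Fin m → Finset (Fin n)) (I : Finset (Fin n)) : Prop :=
  ∃ φ : I → Fin m, Function.Injective φ ∧ ∀ x : I, (x : Fin n) ∈ A (φ x)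

open Finset Function

theorem sum_ne_zero_of_natAbs_eq_two_pow {ι : Type*} [Fintype ι] {F : ι → ℤ} {e : ι → ℕ}
    (he : Injective e) (hF : ∀ x, F x ≠ 0 → (F x).natAbs = 2 ^ e x) {x₀ : ι} (hx₀ : F x₀ ≠ 0) :
    ∑ x, F x ≠ 0 := by
  classical
  obtain ⟨z, hz, hmin⟩ := (univ.filter (F · ≠ 0)).exists_min_image e ⟨x₀, by simpa using hx₀⟩
  have hFz : F z ≠ 0 := (mem_filter.1 hz).2
  have hrest : (2 : ℤ) ^ (e z + 1) ∣ ∑ x ∈ univ.erase z, F x := by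
    refine dvd_sum fun x hx => ?_
    by_cases hFx : F x = 0
    · simp [hFx]
    have hlt : e z < e x :=
      (hmin x (by simpa using hFx)).lt_of_ne fun h => ne_of_mem_erase hx (he h).symm
    rw [← Int.natAbs_dvd_natAbs, hF x hFx, Int.natAbs_pow]
    exact pow_dvd_pow _ hlt
  intro hsum
  rw [← add_sum_erase _ _ (mem_univ z), add_eq_zero_iff_eq_neg] at hsum
  have hdvd : (2 : ℤ) ^ (e z + 1) ∣ F z := hsum ▸ (dvd_neg.2 hrest)
  rw [← Int.natAbs_dvd_natAbs, hF z hFz, Int.natAbs_pow] at hdvd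
  have := (Nat.pow_dvd_pow_iff_le_right (by norm_num : 1 < 2)).1 hdvd
  omega

theorem Matrix.det_ne_zero_of_eq_two_pow_two_pow {ι : Type*} [Fintype ι] [DecidableEq ι]
    {M : Matrix ι ι ℤ} {c : ι → ι → ℕ} (hc : Injective (uncurry c))
    (hM : ∀ i j, M i j ≠ 0 → M i j = 2 ^ 2 ^ c i j) (hdiag : ∀ i, M i i ≠ 0) : M.det ≠ 0 := by
  have hc' {i j i' j'} (h : c i j = c i' j') : i = i' ∧ j = j' :=
    Prod.ext_iff.1 (@hc (i, j) (i', j') h)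
  set e : Equiv.Perm ι → ℕ := fun σ => ∑ k, 2 ^ c (σ k) k
  have he : Injective e := by
    have hgraph (σ : Equiv.Perm ι) : e σ = ∑ b ∈ univ.image (fun k => c (σ k) k), 2 ^ b :=
      (sum_image (f := (2 ^ ·)) (g := fun k => c (σ k) k) fun _ _ _ _ h => (hc' h).2).symm
    intro σ τ h
    have himage := geomSum_injective le_rfl ((hgraph σ).symm.trans (h.trans (hgraph τ)))
    ext k
    obtain ⟨k', -, hk'⟩ := mem_image.1 (himage ▸ mem_image_of_mem (fun k => c (σ k) k) (mem_univ k))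
    obtain ⟨hτσ, rfl⟩ := hc' hk'
    exact hτσ.symm
  rw [Matrix.det_apply']
  refine sum_ne_zero_of_natAbs_eq_two_pow he (fun σ hσ => ?_) (x₀ := 1) ?_
  · have hentry (k : ι) : M (σ k) k = 2 ^ 2 ^ c (σ k) k :=
      hM _ _ fun h0 => hσ (mul_eq_zero_of_right _ (prod_eq_zero (mem_univ k) h0))
    rw [prod_congr rfl fun k _ => hentry k, prod_pow_eq_pow_sum, Int.cast_id, Int.natAbs_mul,
      Int.natAbs_of_isUnit (Units.isUnit _), one_mul, Int.natAbs_pow]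
    rfl
  · simpa using prod_ne_zero_iff.2 fun k _ => hdiag k

theorem card_le_card_of_linearIndependent_of_eq_zero {ι κ K : Type*} [Fintype ι] [Field K]
    {v : ι → κ → K} (hv : LinearIndependent K v) (N : Finset κ)
    (hN : ∀ x, ∀ i ∉ N, v x i = 0) : Fintype.card ι ≤ N.card := by
  have hfactor : v = ExtendByZero.linearMap K ((↑) : N → κ) ∘ fun x (i : N) => v x i := by
    funext x i
    by_cases hi : i ∈ N
    · rw [comp_apply, ExtendByZero.linearMap_apply]
      exact (Subtype.val_injective.extend_apply (fun i : N => v x i) 0 ⟨i, hi⟩).symm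
    · rw [comp_apply, ExtendByZero.linearMap_apply,
        extend_apply' _ _ _ fun ⟨j, hj⟩ => hi (hj ▸ j.2), hN x i hi, Pi.zero_apply]
  rw [hfactor] at hv
  simpa using (hv.of_comp _).fintype_card_le_finrank

theorem isPartialTransversal_of_linearIndependent {n m : ℕ} {K : Type*} [Field K]
    {A : Fin m → Finset (Fin n)} {X : Matrix (Fin m) (Fin n) K} (hX : ∀ i j, j ∉ A i → X i j = 0)
    {J : Finset (Fin n)} (hJ : LinearIndependent K fun j : J => fun i => X i j) :
    IsPartialTransversal A J := by
  classical
  let t : J → Finset (Fin m) := fun j => univ.filter fun i => (j : Fin n) ∈ A i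
  have hall (s : Finset J) : s.card ≤ (s.biUnion t).card := by
    simpa using card_le_card_of_linearIndependent_of_eq_zero
      (hJ.comp ((↑) : s → J) Subtype.val_injective) (s.biUnion t)
      fun j i hi => hX _ _ fun hj => hi (mem_biUnion.2 ⟨j, j.2, by simp [t, hj]⟩)
  obtain ⟨φ, hφ, hφA⟩ := (all_card_le_biUnion_card_iff_exists_injective t).1 hall
  exact ⟨φ, hφ, fun j => by simpa [t] using hφA j⟩

def transversalMatrix {n m : ℕ} (A : Fin m → Finset (Fin n)) : Matrix (Fin m) (Fin n) ℤ :=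
  fun i j => if j ∈ A i then 2 ^ 2 ^ (finProdFinEquiv (i, j) : ℕ) else 0

theorem linearIndependent_transversalMatrix {n m : ℕ} {A : Fin m → Finset (Fin n)}
    {J : Finset (Fin n)} (hJ : IsPartialTransversal A J) :
    LinearIndependent ℚ fun j : J => fun i => (transversalMatrix A i j : ℚ) := by
  obtain ⟨φ, hφ, hφA⟩ := hJ
  let M : Matrix J J ℤ := (transversalMatrix A).submatrix φ (↑)
  have hdet : M.det ≠ 0 := by
    refine Matrix.det_ne_zero_of_eq_two_pow_two_pow
      (c := fun x k => finProdFinEquiv (φ x, (k : Fin n)))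
      (Fin.val_injective.comp (finProdFinEquiv.injective.comp (hφ.prodMap Subtype.val_injective)))
      (fun x k hxk => ?_) fun x => by simp [M, transversalMatrix, hφA x]
    simp only [M, Matrix.submatrix_apply, transversalMatrix] at hxk ⊢
    split_ifs at hxk ⊢ <;> simp_all
  have hcols : LinearIndependent ℚ (M.map ((↑) : ℤ → ℚ)).col :=
    Matrix.linearIndependent_cols_of_det_ne_zero (by rwa [← Int.cast_det, Int.cast_ne_zero])
  exact LinearIndependent.of_comp (LinearMap.funLeft ℚ ℚ φ) hcols

/-- Every transversal matroid can be represented by a matrix with integer entries: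
a set of (rationalized) columns is linearly independent over `ℚ` iff the
corresponding ground-set elements form a partial transversal. -/
theorem transversal_matroid_representable_int (n m : ℕ) (A : Fin m → Finset (Fin n)) :
    ∃ X : Matrix (Fin m) (Fin n) ℤ,
      ∀ J : Finset (Fin n),
        LinearIndependent ℚ (fun j : J => fun i : Fin m => (X i j : ℚ)) ↔
          IsPartialTransversal A J := by
  refine ⟨transversalMatrix A, fun J =>
    ⟨isPartialTransversal_of_linearIndependent (X := (transversalMatrix A).map ((↑) : ℤ → ℚ))
      fun i j hj => ?_,
      linearIndependent_transversalMatrix⟩⟩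
  simp [transversalMatrix, hj]
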